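/- arXiv:1408.4709 — 4 statements merged into one kernel-verified Lean document; each statement's English description precedes it below -/
import Mathlib

section
/- Let q be an odd positive integer and in the complex Clifford algebra C_q let x = (1/2^((q-1)/2))·(e₁+e₂)(e₂+e₃)⋯(e_{q-1}+e_q). Then the coefficient of the identity element e_∅ in x² equals (-1)^((q²-1)/8) / 2^((q-1)/2). Equivalently, writing χ_∅ for the linear functional extracting the coefficient of e_∅, one has χ_∅(((e₁+e₂)⋯(e_{q-1}+e_q))²) = (−1)^((q²−1)/8) · 2^((q−1)/2). -/
/-- The complex Clifford algebra `C_n` on generators `e₁, …, e_n` with `e_j² = 1` and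
`e_j e_l = -e_l e_j` (`j ≠ l`). -/
noncomputable abbrev complexCliffordAlgebra (n : ℕ) :=
  CliffordAlgebra (QuadraticMap.weightedSumSquares ℂ (fun _ : Fin n => (1 : ℂ)))

/-- the `j`-th generator `e_j` of `C_n` -/
noncomputable abbrev cliffordGen (n : ℕ) (j : Fin n) : complexCliffordAlgebra n :=
  CliffordAlgebra.ι (QuadraticMap.weightedSumSquares ℂ (fun _ : Fin n => (1 : ℂ)))
    (Pi.single j 1)

/-- `e_I`: the ordered product of the generators `e_j`, `j ∈ I`. -/
noncomputable def cliffordBasisElem (n : ℕ) (I : Finset (Fin n)) : complexCliffordAlgebra n :=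
  ((I.sort (· ≤ ·)).map (fun j => cliffordGen n j)).prod

/-!
Write `Pₙ = (e₁+e₂)⋯(eₙ+eₙ₊₁)` and `Qₙ = Pₙ eₙ₊₁`, so that `Pₙ₊₁ = Qₙ + Pₙ eₙ₊₂` and
`Qₙ₊₁ = Pₙ + Qₙ eₙ₊₂`. The generator `eₙ₊₂` anticommutes with every factor of `Pₙ` and `Qₙ`,
so it passes `Pₙ` with sign `(-1)ⁿ` and `Qₙ` with sign `(-1)ⁿ⁺¹`. After squaring, the cross terms
have the form `X eₘ` with `X` in the subalgebra generated by the `eⱼ`, `j ≠ m`; such an element is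
a combination of basis elements `e_I` with `m ∈ I`, so `χ_∅` kills it. Hence `aₙ = χ_∅(Pₙ²)` and
`bₙ = χ_∅(Qₙ²)` satisfy `aₙ₊₁ = bₙ + (-1)ⁿ aₙ`, `bₙ₊₁ = aₙ - (-1)ⁿ bₙ`; two steps send
`(a, b)` to `(-2b, 2a)`, and from `a₀ = b₀ = 1` we get `a₂ₖ = (-1)^(k(k+1)/2) 2ᵏ`.
-/

open scoped symmDiff

section Anticommute

variable {R A : Type*} [CommRing R] [Ring A] [Algebra R A]

theorem mul_list_prod_of_forall_anticomm {a : A} {L : List A} (h : ∀ x ∈ L, a * x = -(x * a)) :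
    a * L.prod = ((-1 : R) ^ L.length) • (L.prod * a) := by
  induction L with
  | nil => simp
  | cons x L ih =>
    rw [List.prod_cons, ← mul_assoc, h x (List.mem_cons_self ..), neg_mul, mul_assoc,
      ih fun y hy => h y (List.mem_cons_of_mem _ hy), mul_smul_comm, List.length_cons, pow_succ,
      mul_neg_one, neg_smul, mul_assoc]

theorem map_mul_self_add_mul_eq (φ : A →ₗ[R] R) {B : Subalgebra R A} {f X Y : A} {s t : R}
    (hφ : ∀ b ∈ B, φ (b * f) = 0) (hf : f * f = 1) (hX : X ∈ B) (hY : Y ∈ B)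
    (hfX : f * X = t • (X * f)) (hfY : f * Y = s • (Y * f)) :
    φ ((X + Y * f) * (X + Y * f)) = φ (X * X) + s * φ (Y * Y) := by
  have hXY : φ (X * (Y * f)) = 0 := by rw [← mul_assoc]; exact hφ _ (B.mul_mem hX hY)
  have hYX : φ (Y * f * X) = 0 := by
    rw [mul_assoc, hfX, mul_smul_comm, map_smul, ← mul_assoc, hφ _ (B.mul_mem hY hX), smul_zero]
  have hYY : Y * f * (Y * f) = s • (Y * Y) := by
    rw [mul_assoc, ← mul_assoc f, hfY, smul_mul_assoc, mul_assoc, hf, mul_one, mul_smul_comm]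
  rw [add_mul, mul_add, mul_add, map_add, map_add, map_add, hXY, hYX, hYY, map_smul, smul_eq_mul]
  ring

end Anticommute

theorem closed_form_of_recurrence {R : Type*} [CommRing R] {a b : ℕ → R} {N : ℕ}
    (ha₀ : a 0 = 1) (hb₀ : b 0 = 1)
    (ha : ∀ n, n + 1 < N → a (n + 1) = b n + (-1) ^ n * a n)
    (hb : ∀ n, n + 1 < N → b (n + 1) = a n + (-1) ^ (n + 1) * b n) {k : ℕ} (hk : 2 * k < N) :
    a (2 * k) = (-1) ^ (k * (k + 1) / 2) * 2 ^ k ∧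
      b (2 * k) = (-1) ^ (k * (k + 1) / 2) * (-2) ^ k := by
  induction k with
  | zero => simp [ha₀, hb₀]
  | succ k ih =>
    obtain ⟨iha, ihb⟩ := ih (by omega)
    have hexp : (k + 1) * (k + 1 + 1) / 2 = k * (k + 1) / 2 + (k + 1) := by
      rw [show (k + 1) * (k + 1 + 1) = k * (k + 1) + 2 * (k + 1) by ring,
        Nat.add_mul_div_left _ _ two_pos]
    have hev : (-1 : R) ^ (2 * k) = 1 := by simp [pow_mul]
    have ha₁ : a (2 * k + 1) = b (2 * k) + a (2 * k) := by rw [ha _ (by omega), hev, one_mul]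
    have hb₁ : b (2 * k + 1) = a (2 * k) - b (2 * k) := by
      rw [hb _ (by omega), pow_succ, hev]; ring
    have ha₂ : a (2 * (k + 1)) = -2 * b (2 * k) := by
      rw [mul_add_one, ha _ (by omega), pow_succ, hev, ha₁, hb₁]; ring
    have hb₂ : b (2 * (k + 1)) = 2 * a (2 * k) := by
      rw [mul_add_one, hb _ (by omega), pow_succ, pow_succ, hev, ha₁, hb₁]; ring
    rw [ha₂, hb₂, iha, ihb, hexp, pow_add]
    constructor
    · rw [neg_pow (2 : R)]; ring
    · rw [mul_assoc, ← mul_pow, neg_one_mul, neg_neg]; ring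

section Clifford

variable {q : ℕ}

theorem cliffordGen_mul_self (j : Fin q) : cliffordGen q j * cliffordGen q j = 1 := by
  simp [CliffordAlgebra.ι_sq_scalar, QuadraticMap.weightedSumSquares_apply, Pi.single_apply]

theorem cliffordGen_mul_comm_of_ne {i j : Fin q} (h : i ≠ j) :
    cliffordGen q i * cliffordGen q j = -(cliffordGen q j * cliffordGen q i) := by
  refine CliffordAlgebra.ι_mul_ι_comm_of_isOrtho ?_
  simp [QuadraticMap.isOrtho_def, QuadraticMap.weightedSumSquares_apply, Pi.single_apply,
    mul_add, Finset.sum_add_distrib, h, h.symm]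

theorem cliffordBasisElem_empty : cliffordBasisElem q ∅ = 1 := by
  simp [cliffordBasisElem]

theorem cliffordBasisElem_insert_of_lt {a : Fin q} {s : Finset (Fin q)} (h : ∀ x ∈ s, a < x) :
    cliffordBasisElem q (insert a s) = cliffordGen q a * cliffordBasisElem q s := by
  rw [cliffordBasisElem, Finset.sort_insert _ (fun x hx => (h x hx).le)
    (fun ha => lt_irrefl a (h a ha))]
  simp [cliffordBasisElem]

theorem cliffordBasisElem_singleton (a : Fin q) : cliffordBasisElem q {a} = cliffordGen q a := by
  rw [← insert_empty_eq, cliffordBasisElem_insert_of_lt (by simp), cliffordBasisElem_empty, mul_one]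

theorem exists_cliffordGen_mul_cliffordBasisElem (j : Fin q) (I : Finset (Fin q)) :
    ∃ c : ℂ, cliffordGen q j * cliffordBasisElem q I = c • cliffordBasisElem q (I ∆ {j}) := by
  induction I using Finset.induction_on_min with
  | empty =>
    refine ⟨1, ?_⟩
    rw [show (∅ : Finset (Fin q)) ∆ {j} = {j} from bot_symmDiff _, cliffordBasisElem_empty,
      cliffordBasisElem_singleton, mul_one, one_smul]
  | insert a s ha ih =>
    obtain ⟨c, hc⟩ := ih
    rcases lt_trichotomy j a with hja | rfl | hja
    · have hI : insert a s ∆ {j} = insert j (insert a s) := by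
        ext x; simp only [Finset.mem_symmDiff, Finset.mem_insert, Finset.mem_singleton]; grind
      refine ⟨1, ?_⟩
      rw [hI, one_smul, cliffordBasisElem_insert_of_lt (a := j), cliffordBasisElem_insert_of_lt ha]
      simp only [Finset.mem_insert]
      grind
    · have hI : insert j s ∆ {j} = s := by
        ext x; simp only [Finset.mem_symmDiff, Finset.mem_insert, Finset.mem_singleton]; grind
      refine ⟨1, ?_⟩
      rw [hI, one_smul, cliffordBasisElem_insert_of_lt ha, ← mul_assoc, cliffordGen_mul_self,
        one_mul]
    · have hI : insert a s ∆ {j} = insert a (s ∆ {j}) := by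
        ext x; simp only [Finset.mem_symmDiff, Finset.mem_insert, Finset.mem_singleton]; grind
      refine ⟨-c, ?_⟩
      rw [hI, cliffordBasisElem_insert_of_lt ha, cliffordBasisElem_insert_of_lt, ← mul_assoc,
        cliffordGen_mul_comm_of_ne hja.ne', neg_mul, mul_assoc, hc, mul_smul_comm, neg_smul]
      simp only [Finset.mem_symmDiff, Finset.mem_singleton]
      grind

theorem cliffordGen_mul_mem_span_of_ne {j m : Fin q} (h : j ≠ m) {v : complexCliffordAlgebra q}
    (hv : v ∈ Submodule.span ℂ (cliffordBasisElem q '' {I | m ∈ I})) :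
    cliffordGen q j * v ∈ Submodule.span ℂ (cliffordBasisElem q '' {I | m ∈ I}) := by
  induction hv using Submodule.span_induction with
  | mem y hy =>
    obtain ⟨I, hI, rfl⟩ := hy
    obtain ⟨c, hc⟩ := exists_cliffordGen_mul_cliffordBasisElem j I
    rw [hc]
    refine Submodule.smul_mem _ _ (Submodule.subset_span ⟨_, ?_, rfl⟩)
    simpa [Finset.mem_symmDiff, h.symm] using hI
  | zero => simp
  | add y z _ _ hy hz => rw [mul_add]; exact add_mem hy hz
  | smul c y _ hy => rw [mul_smul_comm]; exact Submodule.smul_mem _ _ hy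

theorem mul_mem_span_of_mem_adjoin {m : Fin q} {X v : complexCliffordAlgebra q}
    (hX : X ∈ Algebra.adjoin ℂ (cliffordGen q '' {j | j ≠ m}))
    (hv : v ∈ Submodule.span ℂ (cliffordBasisElem q '' {I | m ∈ I})) :
    X * v ∈ Submodule.span ℂ (cliffordBasisElem q '' {I | m ∈ I}) := by
  induction hX using Algebra.adjoin_induction generalizing v with
  | mem y hy =>
    obtain ⟨j, hj, rfl⟩ := hy
    exact cliffordGen_mul_mem_span_of_ne hj hv
  | algebraMap r => rw [← Algebra.smul_def]; exact Submodule.smul_mem _ _ hv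
  | add y z _ _ hy hz => rw [add_mul]; exact add_mem (hy hv) (hz hv)
  | mul y z _ _ hy hz => rw [mul_assoc]; exact hy (hz hv)

theorem map_mul_cliffordGen_eq_zero (χ₀ : complexCliffordAlgebra q →ₗ[ℂ] ℂ)
    (hχ₀ : ∀ I : Finset (Fin q), I.Nonempty → χ₀ (cliffordBasisElem q I) = 0) {m : Fin q}
    {X : complexCliffordAlgebra q} (hX : X ∈ Algebra.adjoin ℂ (cliffordGen q '' {j | j ≠ m})) :
    χ₀ (X * cliffordGen q m) = 0 := by
  have hker : Submodule.span ℂ (cliffordBasisElem q '' {I | m ∈ I}) ≤ LinearMap.ker χ₀ :=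
    Submodule.span_le.2 fun _ ⟨I, hI, hx⟩ => hx ▸ hχ₀ I ⟨m, hI⟩
  refine hker (mul_mem_span_of_mem_adjoin hX ?_)
  rw [← cliffordBasisElem_singleton]
  exact Submodule.subset_span ⟨{m}, Finset.mem_singleton_self m, rfl⟩

/-- `eᵢ₊₁` for `i < q` (0-based index), and `0` otherwise; with this junk value two of them
anticommute whenever `i ≠ j`. -/
noncomputable def cliffordGenNat (q i : ℕ) : complexCliffordAlgebra q :=
  if h : i < q then cliffordGen q ⟨i, h⟩ else 0

theorem cliffordGenNat_mul_self {i : ℕ} (h : i < q) :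
    cliffordGenNat q i * cliffordGenNat q i = 1 := by
  rw [cliffordGenNat, dif_pos h, cliffordGen_mul_self]

theorem cliffordGenNat_mul_comm_of_ne {i j : ℕ} (h : i ≠ j) :
    cliffordGenNat q i * cliffordGenNat q j = -(cliffordGenNat q j * cliffordGenNat q i) := by
  unfold cliffordGenNat
  split_ifs <;> simp [cliffordGen_mul_comm_of_ne, h]

theorem map_mul_cliffordGenNat_eq_zero (χ₀ : complexCliffordAlgebra q →ₗ[ℂ] ℂ)
    (hχ₀ : ∀ I : Finset (Fin q), I.Nonempty → χ₀ (cliffordBasisElem q I) = 0) {m : ℕ}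
    {X : complexCliffordAlgebra q} (hX : X ∈ Algebra.adjoin ℂ (cliffordGenNat q '' {i | i ≠ m})) :
    χ₀ (X * cliffordGenNat q m) = 0 := by
  by_cases hm : m < q
  · rw [cliffordGenNat, dif_pos hm]
    refine map_mul_cliffordGen_eq_zero χ₀ hχ₀ (Algebra.adjoin_le ?_ hX)
    rintro _ ⟨i, hi, rfl⟩
    unfold cliffordGenNat
    split_ifs with h
    · exact Algebra.subset_adjoin ⟨_, fun hh => hi (congrArg Fin.val hh), rfl⟩
    · exact zero_mem _
  · simp [cliffordGenNat, hm]

/-- `(e₁+e₂)⋯(eₙ+eₙ₊₁)`. -/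
noncomputable def chainProd (q n : ℕ) : complexCliffordAlgebra q :=
  (List.ofFn fun i : Fin n => cliffordGenNat q i + cliffordGenNat q (i + 1)).prod

theorem chainProd_zero : chainProd q 0 = 1 := rfl

theorem chainProd_succ (n : ℕ) :
    chainProd q (n + 1) = chainProd q n * (cliffordGenNat q n + cliffordGenNat q (n + 1)) := by
  rw [chainProd, chainProd, List.ofFn_succ_last, List.prod_append, List.prod_singleton]
  rfl

theorem chainProd_mem_adjoin {n m : ℕ} (h : n < m) :
    chainProd q n ∈ Algebra.adjoin ℂ (cliffordGenNat q '' {i | i ≠ m}) := by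
  refine Subalgebra.list_prod_mem _ fun x hx => ?_
  obtain ⟨i, rfl⟩ := List.mem_ofFn.1 hx
  exact add_mem (Algebra.subset_adjoin ⟨i, by grind, rfl⟩)
    (Algebra.subset_adjoin ⟨i + 1, by grind, rfl⟩)

theorem cliffordGenNat_mul_chainProd {n m : ℕ} (h : n < m) :
    cliffordGenNat q m * chainProd q n = ((-1 : ℂ) ^ n) • (chainProd q n * cliffordGenNat q m) := by
  rw [chainProd, mul_list_prod_of_forall_anticomm (R := ℂ), List.length_ofFn]
  intro x hx
  obtain ⟨i, rfl⟩ := List.mem_ofFn.1 hx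
  rw [mul_add, add_mul, cliffordGenNat_mul_comm_of_ne (i := m) (by omega),
    cliffordGenNat_mul_comm_of_ne (i := m) (by omega), neg_add]

theorem cliffordGenNat_mul_chainProd_mul {n m : ℕ} (h : n < m) :
    cliffordGenNat q m * (chainProd q n * cliffordGenNat q n) =
      ((-1 : ℂ) ^ (n + 1)) • (chainProd q n * cliffordGenNat q n * cliffordGenNat q m) := by
  rw [← mul_assoc, cliffordGenNat_mul_chainProd h, smul_mul_assoc, mul_assoc,
    cliffordGenNat_mul_comm_of_ne h.ne', mul_neg, pow_succ, mul_neg_one, neg_smul, smul_neg,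
    mul_assoc]

theorem ofFn_cliffordGen_prod_eq_chainProd {n : ℕ} (hn : n < q) :
    (List.ofFn fun j : Fin n =>
        cliffordGen q ⟨j, by omega⟩ + cliffordGen q ⟨j + 1, by omega⟩).prod = chainProd q n := by
  simp only [chainProd, cliffordGenNat]
  congr with j
  rw [dif_pos (by omega), dif_pos (by omega)]

section ScalarPart

variable (χ₀ : complexCliffordAlgebra q →ₗ[ℂ] ℂ)
  (hχ₀ : ∀ I : Finset (Fin q), I.Nonempty → χ₀ (cliffordBasisElem q I) = 0)
include hχ₀

theorem map_chainProd_succ_mul_self {n : ℕ} (hn : n + 1 < q) :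
    χ₀ (chainProd q (n + 1) * chainProd q (n + 1)) =
      χ₀ (chainProd q n * cliffordGenNat q n * (chainProd q n * cliffordGenNat q n)) +
        (-1) ^ n * χ₀ (chainProd q n * chainProd q n) := by
  have hP := chainProd_mem_adjoin (q := q) n.lt_add_one
  have hg : cliffordGenNat q n ∈ Algebra.adjoin ℂ (cliffordGenNat q '' {i | i ≠ n + 1}) :=
    Algebra.subset_adjoin ⟨n, by simp, rfl⟩
  rw [chainProd_succ, mul_add]
  exact map_mul_self_add_mul_eq χ₀ (fun _ hb => map_mul_cliffordGenNat_eq_zero χ₀ hχ₀ hb)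
    (cliffordGenNat_mul_self hn) (Subalgebra.mul_mem _ hP hg) hP
    (cliffordGenNat_mul_chainProd_mul n.lt_add_one) (cliffordGenNat_mul_chainProd n.lt_add_one)

theorem map_chainProd_succ_mul_mul_self {n : ℕ} (hn : n + 1 < q) :
    χ₀ (chainProd q (n + 1) * cliffordGenNat q (n + 1) *
        (chainProd q (n + 1) * cliffordGenNat q (n + 1))) =
      χ₀ (chainProd q n * chainProd q n) + (-1) ^ (n + 1) *
        χ₀ (chainProd q n * cliffordGenNat q n * (chainProd q n * cliffordGenNat q n)) := by
  have hP := chainProd_mem_adjoin (q := q) n.lt_add_one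
  have hg : cliffordGenNat q n ∈ Algebra.adjoin ℂ (cliffordGenNat q '' {i | i ≠ n + 1}) :=
    Algebra.subset_adjoin ⟨n, by simp, rfl⟩
  have hsplit : chainProd q (n + 1) * cliffordGenNat q (n + 1) =
      chainProd q n + chainProd q n * cliffordGenNat q n * cliffordGenNat q (n + 1) := by
    rw [chainProd_succ, mul_add, add_mul, mul_assoc _ (cliffordGenNat q (n + 1)),
      cliffordGenNat_mul_self hn, mul_one, add_comm]
  rw [hsplit]
  exact map_mul_self_add_mul_eq χ₀ (fun _ hb => map_mul_cliffordGenNat_eq_zero χ₀ hχ₀ hb)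
    (cliffordGenNat_mul_self hn) hP (Subalgebra.mul_mem _ hP hg)
    (cliffordGenNat_mul_chainProd n.lt_add_one) (cliffordGenNat_mul_chainProd_mul n.lt_add_one)

theorem map_chainProd_mul_self_even (hχ₀_one : χ₀ 1 = 1) {k : ℕ} (hk : 2 * k < q) :
    χ₀ (chainProd q (2 * k) * chainProd q (2 * k)) = (-1) ^ (k * (k + 1) / 2) * 2 ^ k := by
  refine (closed_form_of_recurrence (b := fun n =>
      χ₀ (chainProd q n * cliffordGenNat q n * (chainProd q n * cliffordGenNat q n))) ?_ ?_
    (fun n hn => map_chainProd_succ_mul_self χ₀ hχ₀ hn)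
    (fun n hn => map_chainProd_succ_mul_mul_self χ₀ hχ₀ hn) hk).1
  · rw [chainProd_zero, mul_one, hχ₀_one]
  · simp only [chainProd_zero, one_mul, cliffordGenNat_mul_self (by omega : 0 < q), hχ₀_one]

end ScalarPart

end Clifford

/-- Let `q` be an odd positive integer and, in the complex Clifford algebra `C_q`, let
`x = (1/2^((q-1)/2))·(e₁+e₂)(e₂+e₃)⋯(e_{q-1}+e_q)`.  Then the coefficient of `e_∅` in `x²`
is `(-1)^((q²-1)/8)/2^((q-1)/2)`; equivalently, writing `χ_∅` for the linear functional
extracting the coefficient of `e_∅` (characterized by `χ_∅(e_∅) = 1` and `χ_∅(e_I) = 0` for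
`I ≠ ∅`), one has `χ_∅(((e₁+e₂)⋯(e_{q-1}+e_q))²) = (-1)^((q²-1)/8)·2^((q-1)/2)`. -/
theorem stmt_9 (q : ℕ) (hq : Odd q)
    (χ₀ : complexCliffordAlgebra q →ₗ[ℂ] ℂ)
    (hχ₀_one : χ₀ 1 = 1)
    (hχ₀ : ∀ I : Finset (Fin q), I.Nonempty → χ₀ (cliffordBasisElem q I) = 0) :
    χ₀ ((List.ofFn (fun j : Fin (q - 1) =>
          cliffordGen q ⟨(j : ℕ), by omega⟩ + cliffordGen q ⟨(j : ℕ) + 1, by omega⟩)).prod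
        * (List.ofFn (fun j : Fin (q - 1) =>
          cliffordGen q ⟨(j : ℕ), by omega⟩ + cliffordGen q ⟨(j : ℕ) + 1, by omega⟩)).prod)
      = (-1 : ℂ) ^ ((q ^ 2 - 1) / 8) * 2 ^ ((q - 1) / 2) := by
  obtain ⟨k, rfl⟩ := hq
  have hsq : (2 * k + 1) ^ 2 - 1 = 8 * (k * (k + 1) / 2) := by
    obtain ⟨c, hc⟩ := Nat.even_mul_succ_self k
    rw [Nat.sub_eq_of_eq_add (by ring : (2 * k + 1) ^ 2 = 4 * (k * (k + 1)) + 1), hc]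
    omega
  rw [ofFn_cliffordGen_prod_eq_chainProd (by omega), Nat.add_sub_cancel, hsq,
    Nat.mul_div_cancel_left _ (by norm_num), Nat.mul_div_cancel_left _ two_pos]
  exact map_chainProd_mul_self_even χ₀ hχ₀ hχ₀_one (by omega)
end

section
/- Let λ be a partition of n and q a positive integer. If μ is obtained from λ by removing a q-hook b, then (−1)^{L(b)} = δ_q(λ)·δ_q(μ), where L(b) is the leg length of the hook b and δ_q denotes the q-sign of a partition. -/
/-!
The `q`-sign of a beta-set `B` is `(-1) ^ N`, where `N` counts the pairs `x < y` in `B`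
whose residues mod `q` come in the opposite order. Moving a bead from `h` to `h - q` keeps its
residue, so only the pairs containing the moved bead can change their status; a bead `x`
forms an inverted pair with exactly one of `h` and `h - q` precisely when it lies strictly
between them. Hence `N` changes by the leg length modulo `2`.
-/

open Finset

namespace QSign

def inversions (q : ℕ) (B : Finset ℕ) : ℕ :=
  ∑ x ∈ B, #(B.filter fun y => x < y ∧ y % q < x % q)

def sign (q : ℕ) (B : Finset ℕ) : ℤ :=
  (-1) ^ inversions q B

lemma sign_eq_one_or_eq_neg_one (q : ℕ) (B : Finset ℕ) : sign q B = 1 ∨ sign q B = -1 :=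
  (Nat.even_or_odd _).imp Even.neg_one_pow Odd.neg_one_pow

def Inverted (q a x : ℕ) : Prop :=
  x < a ∧ a % q < x % q ∨ a < x ∧ x % q < a % q

instance (q a x : ℕ) : Decidable (Inverted q a x) := by
  unfold Inverted; infer_instance

lemma inversions_insert (q a : ℕ) {C : Finset ℕ} (ha : a ∉ C) :
    inversions q (insert a C) = inversions q C + #(C.filter (Inverted q a)) := by
  have hrow : ∀ x ∈ C, #((insert a C).filter fun y => x < y ∧ y % q < x % q)
      = #(C.filter fun y => x < y ∧ y % q < x % q)
        + if x < a ∧ a % q < x % q then 1 else 0 := by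
    intro x hx
    rw [filter_insert]
    split_ifs
    · exact card_insert_of_notMem fun hmem => ha (mem_filter.mp hmem).1
    · rfl
  have hcross : #(C.filter (Inverted q a)) = #(C.filter fun x => x < a ∧ a % q < x % q)
      + #(C.filter fun y => a < y ∧ y % q < a % q) := by
    rw [← card_union_of_disjoint (disjoint_filter.mpr fun _ _ h₁ h₂ => by omega),
      ← filter_or]
    rfl
  rw [inversions, inversions, sum_insert ha, filter_insert, if_neg (by simp), sum_congr rfl hrow,
    sum_add_distrib, ← card_filter, hcross]
  ring

lemma sign_insert (q a : ℕ) {C : Finset ℕ} (ha : a ∉ C) :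
    sign q (insert a C) = sign q C * ∏ x ∈ C, if Inverted q a x then -1 else 1 := by
  rw [sign, sign, inversions_insert q a ha, pow_add, ← prod_filter, prod_const]

lemma mod_ne_of_sub_lt_of_lt {q h x : ℕ} (hlo : h - q < x) (hhi : x < h) : x % q ≠ h % q := by
  intro hmod
  have hdvd : (h - x) % q = 0 := Nat.sub_mod_eq_zero_of_mod_eq hmod.symm
  rw [Nat.mod_eq_of_lt (by omega)] at hdvd
  omega

lemma xor_inverted_iff {q h x : ℕ} (hqh : q ≤ h) (hx : x ≠ h) (hx' : x ≠ h - q) :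
    Xor (Inverted q h x) (Inverted q (h - q) x) ↔ h - q < x ∧ x < h := by
  have hres : (h - q) % q = h % q := (Nat.mod_eq_sub_mod hqh).symm
  have hbetween : h - q < x → x < h → x % q ≠ h % q := mod_ne_of_sub_lt_of_lt
  unfold Inverted Xor
  rw [hres]
  generalize x % q = s at hbetween ⊢
  generalize h % q = r at hbetween ⊢
  omega

lemma sign_insert_mul_sign_insert_sub {q h : ℕ} {C : Finset ℕ} (hqh : q ≤ h) (hh : h ∉ C)
    (hh' : h - q ∉ C) :
    sign q (insert h C) * sign q (insert (h - q) C)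
      = (-1) ^ #(C.filter fun x => h - q < x ∧ x < h) := by
  have hpoint : ∀ x ∈ C,
      ((if Inverted q h x then -1 else 1) * if Inverted q (h - q) x then -1 else 1)
        = if h - q < x ∧ x < h then (-1 : ℤ) else 1 := by
    intro x hx
    have hxor := xor_inverted_iff hqh (ne_of_mem_of_not_mem hx hh) (ne_of_mem_of_not_mem hx hh')
    unfold Xor at hxor
    split_ifs <;> simp_all
  have hsq : sign q C * sign q C = 1 := by
    rcases sign_eq_one_or_eq_neg_one q C with h₁ | h₁ <;> simp [h₁]
  rw [sign_insert q h hh, sign_insert q (h - q) hh', ← prod_const, prod_filter,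
    mul_mul_mul_comm, hsq, one_mul, ← prod_mul_distrib, prod_congr rfl hpoint]

end QSign

open QSign in
theorem stmt_10_general (q : ℕ) :
    ∃ δ : Finset ℕ → ℤ, (∀ B, δ B = 1 ∨ δ B = -1) ∧
      ∀ (B : Finset ℕ) (h : ℕ), h ∈ B → q ≤ h → h - q ∉ B →
        (-1 : ℤ) ^ (B.filter (fun x => h - q < x ∧ x < h)).card
          = δ B * δ (insert (h - q) (B.erase h)) := by
  refine ⟨sign q, sign_eq_one_or_eq_neg_one q, fun B h hh hqh hh' => ?_⟩
  have hleg : B.filter (fun x => h - q < x ∧ x < h)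
      = (B.erase h).filter (fun x => h - q < x ∧ x < h) := by
    rw [filter_erase, erase_eq_of_notMem (by simp)]
  rw [hleg, ← sign_insert_mul_sign_insert_sub hqh (notMem_erase h B)
    (fun hmem => hh' (mem_of_mem_erase hmem)), insert_erase hh]

/-- **Leg lengths of `q`-hooks and the `q`-sign.**
Partitions are encoded by their beta-sets (first-column hook lengths): a finite set
`B ⊆ ℕ`.  Removing a `q`-hook from the partition corresponds to replacing some `h ∈ B`
with `h ≥ q` and `h - q ∉ B` by `h - q`; the leg length `L(b)` of the removed hook is the
number of elements of `B` strictly between `h - q` and `h`.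

The statement: there is a sign function `δ_q` on partitions (the `q`-sign) such that
whenever `μ` is obtained from `λ` by removing a `q`-hook `b`, one has
`(-1)^{L(b)} = δ_q(λ)·δ_q(μ)`. -/
theorem stmt_10 (q : ℕ) (hq : 0 < q) :
    ∃ δ : Finset ℕ → ℤ, (∀ B, δ B = 1 ∨ δ B = -1) ∧
      ∀ (B : Finset ℕ) (h : ℕ), h ∈ B → q ≤ h → h - q ∉ B →
        (-1 : ℤ) ^ (B.filter (fun x => h - q < x ∧ x < h)).card
          = δ B * δ (insert (h - q) (B.erase h)) :=
  stmt_10_general q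
end

section
/- Let λ be a partition of n into distinct parts and q an odd positive integer. If μ is obtained from λ by removing a q-bar b, then (−1)^{L(b)} = δ_q̄(λ)·δ_q̄(μ), where L(b) is the leg length of the q-bar and δ_q̄ denotes the q̄-sign. -/
/-!
Take `δ(λ)` to be the sign of the permutation that sorts the parts of `λ`, listed increasingly,
by the key `barKey q`: first the class `min (x % q) (q - x % q)` of a part `x`, then `x` itself,
negated when `2 * (x % q) ≥ q`. Removing a `q`-bar only touches parts whose keys are adjacent in
the key order (`x` and `x - q`; the two parts `x`, `y` with `x + y = q`; or the part `q`, whose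
key is smallest), so `δ(λ) δ(μ)` is `(-1)` to the number of parts lying between the touched ones
in the natural order, which is the leg length.
-/

open Finset

lemma Int.units_mul_mul_mul_cancel (u v w : ℤˣ) : u * v * (v * w) = u * w := by
  rw [mul_assoc, ← mul_assoc v, Int.units_mul_self, one_mul]

lemma neg_one_pow_card_filter {ι : Type*} (s : Finset ι) (p : ι → Prop) [DecidablePred p] :
    (-1 : ℤˣ) ^ #{z ∈ s | p z} = ∏ z ∈ s, if p z then -1 else 1 := by
  simp [prod_ite]

section InversionSign

variable {α β : Type*} [LinearOrder α] [LinearOrder β] (κ : α → β)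

def pairSign (u v : α) : ℤˣ := if (u < v ↔ κ u < κ v) then 1 else -1

def inversionSign (X : Finset α) : ℤˣ := ∏ v ∈ X, ∏ u ∈ X with u < v, pairSign κ u v

variable {κ}

lemma pairSign_comm (hκ : Function.Injective κ) {u v : α} (h : u ≠ v) :
    pairSign κ u v = pairSign κ v u := by
  have hκuv : κ u ≠ κ v := hκ.ne h
  unfold pairSign
  congr 1
  apply propext
  rcases h.lt_or_gt with h | h <;> rcases hκuv.lt_or_gt with h' | h' <;>
    simp [h, h', h.not_gt, h'.not_gt]

lemma inversionSign_insert (hκ : Function.Injective κ) {X : Finset α} {a : α} (ha : a ∉ X) :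
    inversionSign κ (insert a X) = inversionSign κ X * ∏ z ∈ X, pairSign κ z a := by
  have hsplit : ∀ z ∈ X, pairSign κ z a =
      (if a < z then pairSign κ a z else 1) * (if z < a then pairSign κ z a else 1) := by
    intro z hz
    have hza : z ≠ a := ne_of_mem_of_not_mem hz ha
    rcases hza.lt_or_gt with h | h
    · simp [h, h.not_gt]
    · simp [h, h.not_gt, pairSign_comm hκ hza]
  have hrow : ∀ v ∈ X, ∏ u ∈ insert a X with u < v, pairSign κ u v =
      (if a < v then pairSign κ a v else 1) * ∏ u ∈ X with u < v, pairSign κ u v := by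
    intro v _
    rw [filter_insert]
    split_ifs
    · rw [prod_insert (fun h => ha (mem_filter.mp h).1)]
    · rw [one_mul]
  rw [inversionSign, prod_insert ha, filter_insert, if_neg (lt_irrefl a), prod_congr rfl hrow,
    prod_mul_distrib, prod_congr rfl hsplit, prod_mul_distrib, ← prod_filter, ← prod_filter,
    inversionSign]
  ac_rfl

lemma inversionSign_insert_mul_self (hκ : Function.Injective κ) {X : Finset α} {a : α}
    (ha : a ∉ X) :
    inversionSign κ (insert a X) * inversionSign κ X = ∏ z ∈ X, pairSign κ z a := by
  rw [inversionSign_insert hκ ha, mul_right_comm, Int.units_mul_self, one_mul]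

lemma pairSign_mul_pairSign {z a b : α} (h : κ z < κ a ↔ κ z < κ b) :
    pairSign κ z a * pairSign κ z b = if (z < a ↔ z < b) then 1 else -1 := by
  unfold pairSign
  split_ifs <;> tauto

lemma pairSign_of_lt {z a : α} (h : κ a < κ z) : pairSign κ z a = if z < a then -1 else 1 := by
  by_cases hz : z < a <;> simp [pairSign, hz, h.not_gt]

lemma inversionSign_mul_erase_of_lt (hκ : Function.Injective κ) {X : Finset α} {a : α}
    (ha : a ∈ X) (hmin : ∀ z ∈ X, z ≠ a → κ a < κ z) :
    (-1) ^ #{z ∈ X | z < a} = inversionSign κ X * inversionSign κ (X.erase a) := by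
  obtain ⟨Y, haY, rfl⟩ : ∃ Y, a ∉ Y ∧ X = insert a Y :=
    ⟨X.erase a, notMem_erase a X, (insert_erase ha).symm⟩
  have hsign : ∀ z ∈ Y, pairSign κ z a = if z < a then -1 else 1 := fun z hz =>
    pairSign_of_lt (hmin z (mem_insert_of_mem hz) (ne_of_mem_of_not_mem hz haY))
  rw [erase_insert haY, inversionSign_insert_mul_self hκ haY, prod_congr rfl hsign,
    neg_one_pow_card_filter, prod_insert haY, if_neg (lt_irrefl a), one_mul]

lemma inversionSign_mul_replace (hκ : Function.Injective κ) {X : Finset α} {a b : α}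
    (ha : a ∈ X) (hb : b ∉ X) (hba : b < a)
    (hadj : ∀ z ∈ X, z ≠ a → (κ z < κ a ↔ κ z < κ b)) :
    (-1) ^ #{z ∈ X | b < z ∧ z < a} =
      inversionSign κ X * inversionSign κ (insert b (X.erase a)) := by
  obtain ⟨Y, haY, rfl⟩ : ∃ Y, a ∉ Y ∧ X = insert a Y :=
    ⟨X.erase a, notMem_erase a X, (insert_erase ha).symm⟩
  have hbY : b ∉ Y := fun h => hb (mem_insert_of_mem h)
  have hsign : ∀ z ∈ Y,
      pairSign κ z a * pairSign κ z b = if b < z ∧ z < a then -1 else 1 := by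
    intro z hz
    rw [pairSign_mul_pairSign (hadj z (mem_insert_of_mem hz) (ne_of_mem_of_not_mem hz haY))]
    have hzb : z ≠ b := ne_of_mem_of_not_mem hz hbY
    by_cases h : b < z ∧ z < a
    · rw [if_neg (by grind), if_pos h]
    · rw [if_pos (by grind), if_neg h]
  calc (-1) ^ #{z ∈ insert a Y | b < z ∧ z < a}
      = ∏ z ∈ Y, pairSign κ z a * pairSign κ z b := by
        rw [neg_one_pow_card_filter, prod_insert haY, if_neg (by simp), one_mul,
          prod_congr rfl hsign]
    _ = inversionSign κ (insert a Y) * inversionSign κ Y *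
          (inversionSign κ Y * inversionSign κ (insert b Y)) := by
        rw [inversionSign_insert_mul_self hκ haY, mul_comm (inversionSign κ Y),
          inversionSign_insert_mul_self hκ hbY, prod_mul_distrib]
    _ = _ := by rw [erase_insert haY, Int.units_mul_mul_mul_cancel]

lemma inversionSign_mul_erase_pair (hκ : Function.Injective κ) {X : Finset α} {a b : α}
    (ha : a ∈ X) (hb : b ∈ X) (hba : b < a) (hab : κ a < κ b)
    (hadj : ∀ z ∈ X, z ≠ a → z ≠ b → (κ z < κ a ↔ κ z < κ b)) :
    (-1) ^ (#{z ∈ X | z < a} + #{z ∈ X | z < b}) =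
      inversionSign κ X * inversionSign κ ((X.erase a).erase b) := by
  obtain ⟨Y, haY, hbY, rfl⟩ :
      ∃ Y, a ∉ insert b Y ∧ b ∉ Y ∧ X = insert a (insert b Y) :=
    ⟨(X.erase a).erase b, by simp [hba.ne'], notMem_erase b _,
      by rw [insert_erase (mem_erase.2 ⟨hba.ne, hb⟩), insert_erase ha]⟩
  have hsign : ∀ z ∈ Y, (if z < a then -1 else 1) * (if z < b then -1 else 1) =
      pairSign κ z a * pairSign κ z b := by
    intro z hz
    have hza : z ≠ a := ne_of_mem_of_not_mem (mem_insert_of_mem hz) haY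
    have hzb : z ≠ b := ne_of_mem_of_not_mem hz hbY
    rw [pairSign_mul_pairSign (hadj z (by simp [hz]) hza hzb)]
    split_ifs <;> tauto
  have hba_sign : pairSign κ b a = -1 := by simp [pairSign, hba, hab.not_gt]
  calc (-1) ^ (#{z ∈ insert a (insert b Y) | z < a} + #{z ∈ insert a (insert b Y) | z < b})
      = pairSign κ b a * ∏ z ∈ Y, pairSign κ z a * pairSign κ z b := by
        rw [pow_add, neg_one_pow_card_filter, neg_one_pow_card_filter, ← prod_mul_distrib,
          prod_insert haY, prod_insert hbY, prod_congr rfl hsign, hba_sign]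
        simp [hba, hba.not_gt]
    _ = inversionSign κ (insert a (insert b Y)) * inversionSign κ (insert b Y) *
          (inversionSign κ (insert b Y) * inversionSign κ Y) := by
        rw [inversionSign_insert_mul_self hκ haY, inversionSign_insert_mul_self hκ hbY,
          prod_insert hbY, prod_mul_distrib, mul_assoc]
    _ = _ := by rw [erase_insert haY, erase_insert hbY, Int.units_mul_mul_mul_cancel]

end InversionSign

def barClass (q x : ℕ) : ℕ := min (x % q) (q - x % q)

def barKey (q x : ℕ) : ℕ ×ₗ ℤ :=
  toLex (barClass q x, if 2 * (x % q) < q then (x : ℤ) else -x)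

lemma barKey_injective (q : ℕ) : Function.Injective (barKey q) := by
  intro x y h
  simp only [barKey, toLex_inj, Prod.mk.injEq] at h
  split_ifs at h <;> omega

lemma Nat.mod_ne_of_lt_of_lt {q x z : ℕ} (h₁ : x - q < z) (h₂ : z < x) : z % q ≠ x % q := by
  intro h
  have := Nat.le_of_dvd (by omega) ((Nat.modEq_iff_dvd' h₂.le).mp h)
  omega

lemma barKey_lt_iff_lt_barKey_sub {q x z : ℕ} (hq : 0 < q) (hqx : q ≤ x) (hzx : z ≠ x)
    (hzq : z ≠ x - q) : barKey q z < barKey q x ↔ barKey q z < barKey q (x - q) := by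
  have hsame : z % q = x % q → z < x - q ∨ x < z := fun h => by
    by_contra! hz
    exact Nat.mod_ne_of_lt_of_lt (by omega) (by omega) h
  have hr := Nat.mod_lt x hq
  have hs := Nat.mod_lt z hq
  simp only [barKey, barClass, Prod.Lex.toLex_lt_toLex, ← Nat.mod_eq_sub_mod hqx] at hsame ⊢
  generalize x % q = r at *
  generalize z % q = s at *
  split_ifs <;> omega

lemma barKey_self_lt {q z : ℕ} (hq : 0 < q) (hz : 0 < z) (hzq : z ≠ q) :
    barKey q q < barKey q z := by
  have hmul : z % q = 0 → q < z := fun h => by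
    have := Nat.le_of_dvd hz (Nat.dvd_of_mod_eq_zero h)
    omega
  have hs := Nat.mod_lt z hq
  simp only [barKey, barClass, Prod.Lex.toLex_lt_toLex, Nat.mod_self] at hmul ⊢
  generalize z % q = s at *
  split_ifs <;> omega

lemma barKey_lt_of_add_eq {q x y : ℕ} (hy : 0 < y) (hyx : y < x) (hxy : x + y = q) :
    barKey q x < barKey q y := by
  simp only [barKey, barClass, Prod.Lex.toLex_lt_toLex, Nat.mod_eq_of_lt (show x < q by omega),
    Nat.mod_eq_of_lt (show y < q by omega)]
  split_ifs <;> omega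

lemma barKey_lt_iff_of_add_eq {q x y z : ℕ} (hy : 0 < y) (hyx : y < x) (hxy : x + y = q)
    (hzx : z ≠ x) (hzy : z ≠ y) :
    barKey q z < barKey q x ↔ barKey q z < barKey q y := by
  have hs := Nat.mod_lt z (show 0 < q by omega)
  have hsz := Nat.mod_le z q
  simp only [barKey, barClass, Prod.Lex.toLex_lt_toLex, Nat.mod_eq_of_lt (show x < q by omega),
    Nat.mod_eq_of_lt (show y < q by omega)]
  generalize z % q = s at *
  split_ifs <;> omega

theorem stmt_11_general (q : ℕ) (hq0 : 0 < q) :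
    ∃ δ : Finset ℕ → ℤ, (∀ X, δ X = 1 ∨ δ X = -1) ∧
      -- type (a): replace a part `x > q` by `x - q`
      (∀ (X : Finset ℕ) (x : ℕ), 0 ∉ X → x ∈ X → q < x → x - q ∉ X →
        (-1 : ℤ) ^ (X.filter (fun z => x - q < z ∧ z < x)).card
          = δ X * δ (insert (x - q) (X.erase x))) ∧
      -- type (b): delete a part equal to `q`
      (∀ X : Finset ℕ, 0 ∉ X → q ∈ X →
        (-1 : ℤ) ^ (X.filter (fun z => z < q)).card = δ X * δ (X.erase q)) ∧
      -- type (c): delete two parts `x > y` with `x + y = q`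
      (∀ (X : Finset ℕ) (x y : ℕ), 0 ∉ X → x ∈ X → y ∈ X → y < x → x + y = q →
        (-1 : ℤ) ^ ((X.filter (fun z => z < x)).card + (X.filter (fun z => z < y)).card)
          = δ X * δ ((X.erase x).erase y)) := by
  have hκ := barKey_injective q
  refine ⟨fun X => inversionSign (barKey q) X, fun X => ?_, ?_, ?_, ?_⟩
  · rcases Int.units_eq_one_or (inversionSign (barKey q) X) with h | h <;> simp [h]
  · intro X x _ hx hqx hxq
    have := inversionSign_mul_replace hκ hx hxq (by omega) fun z hz hzx =>
      barKey_lt_iff_lt_barKey_sub hq0 hqx.le hzx (ne_of_mem_of_not_mem hz hxq)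
    simpa using congrArg Units.val this
  · intro X h0 hqX
    have := inversionSign_mul_erase_of_lt hκ hqX fun z hz hzq =>
      barKey_self_lt hq0 (Nat.pos_of_ne_zero (ne_of_mem_of_not_mem hz h0)) hzq
    simpa using congrArg Units.val this
  · intro X x y h0 hx hy hyx hxy
    have hy0 : 0 < y := Nat.pos_of_ne_zero (ne_of_mem_of_not_mem hy h0)
    have := inversionSign_mul_erase_pair hκ hx hy hyx (barKey_lt_of_add_eq hy0 hyx hxy)
      fun z _ hzx hzy => barKey_lt_iff_of_add_eq hy0 hyx hxy hzx hzy
    simpa using congrArg Units.val this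

/-- **Leg lengths of `q`-bars and the `q̄`-sign** (`q` odd).
A partition `λ` with distinct parts is encoded by its set of parts, a finite set
`X ⊆ ℕ` with `0 ∉ X`.  Removing a `q`-bar from `λ` corresponds to one of:
(a) replacing a part `x > q` with `x - q ∉ X` by `x - q`, with leg length
    `L = #{z ∈ X | x - q < z < x}`;
(b) deleting a part equal to `q`, with leg length `L = #{z ∈ X | z < q}`;
(c) deleting two parts `x > y` with `x + y = q`, with leg length
    `L = #{z ∈ X | z < x} + #{z ∈ X | z < y}`.

The statement: there is a sign function `δ_q̄` on strict partitions (the `q̄`-sign) such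
that whenever `μ` is obtained from `λ` by removing a `q`-bar `b`, one has
`(-1)^{L(b)} = δ_q̄(λ)·δ_q̄(μ)`. -/
theorem stmt_11 (q : ℕ) (hq : Odd q) (hq0 : 0 < q) :
    ∃ δ : Finset ℕ → ℤ, (∀ X, δ X = 1 ∨ δ X = -1) ∧
      -- type (a): replace a part `x > q` by `x - q`
      (∀ (X : Finset ℕ) (x : ℕ), 0 ∉ X → x ∈ X → q < x → x - q ∉ X →
        (-1 : ℤ) ^ (X.filter (fun z => x - q < z ∧ z < x)).card
          = δ X * δ (insert (x - q) (X.erase x))) ∧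
      -- type (b): delete a part equal to `q`
      (∀ X : Finset ℕ, 0 ∉ X → q ∈ X →
        (-1 : ℤ) ^ (X.filter (fun z => z < q)).card = δ X * δ (X.erase q)) ∧
      -- type (c): delete two parts `x > y` with `x + y = q`
      (∀ (X : Finset ℕ) (x y : ℕ), 0 ∉ X → x ∈ X → y ∈ X → y < x → x + y = q →
        (-1 : ℤ) ^ ((X.filter (fun z => z < x)).card + (X.filter (fun z => z < y)).card)
          = δ X * δ ((X.erase x).erase y)) :=
  stmt_11_general q hq0
end

section
/- Let U = U⁺ ⊕ U⁻, S, T be as above, and let ρ₁: H → GL(U) be a linear map such that ρ₁(x) maps U^ε to U^{ε·ε(x)} for a sign character ε: H → {±1} (i.e. ρ₁(x) preserves the decomposition if ε(x)=1 and swaps the summands if ε(x)=−1). Then for all x ∈ H: T ∘ (ρ₁(x) ⊗ 1) ∘ T^{-1} = S^{(1−ε(x))/2} ⊗ ρ₁(x) as maps on U ⊗ U. -/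
open TensorProduct

/-!
Write `k = 1` if `b ∈ U⁻` and `k = 0` if `b ∈ U⁺`. The four rules defining `T` say that
`T (a ⊗ b) = b ⊗ Sᵏ a` for every `a`. Moreover `ρ₁(x)` commutes with `S` when `ε(x) = 1` and
anticommutes with it when `ε(x) = -1`, while `S^((1-ε(x))/2) b = ε(x)ᵏ b`. Hence both sides of
the identity send `a ⊗ b` to `ε(x)ᵏ (b ⊗ ρ₁(x) Sᵏ a)`, and `U ⊗ U` is spanned by such `a ⊗ b`.
-/

theorem TensorProduct.ext_of_codisjoint_right {R M N P : Type*} [CommSemiring R]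
    [AddCommMonoid M] [AddCommMonoid N] [AddCommMonoid P] [Module R M] [Module R N] [Module R P]
    {p q : Submodule R N} (hpq : Codisjoint p q) {g h : M ⊗[R] N →ₗ[R] P}
    (hp : ∀ a, ∀ b ∈ p, g (a ⊗ₜ b) = h (a ⊗ₜ b)) (hq : ∀ a, ∀ b ∈ q, g (a ⊗ₜ b) = h (a ⊗ₜ b)) :
    g = h :=
  TensorProduct.ext <| LinearMap.ext fun a =>
    LinearMap.ext_on_codisjoint hpq (fun b hb => hp a b hb) (fun b hb => hq a b hb)

section Grading

variable {R M : Type*} [CommRing R] [AddCommGroup M] [Module R M]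
  {Up Um : Submodule R M} {S : M →ₗ[R] M}

theorem comp_eq_comp_of_mapsTo (hcompl : IsCompl Up Um)
    (hSp : ∀ u ∈ Up, S u = u) (hSm : ∀ u ∈ Um, S u = -u) {f : M →ₗ[R] M}
    (hfp : ∀ u ∈ Up, f u ∈ Up) (hfm : ∀ u ∈ Um, f u ∈ Um) :
    S ∘ₗ f = f ∘ₗ S :=
  LinearMap.ext_on_codisjoint hcompl.codisjoint
    (fun u hu => by simp [hSp _ (hfp u hu), hSp u hu])
    (fun u hu => by simp [hSm _ (hfm u hu), hSm u hu])

theorem comp_eq_neg_comp_of_swaps (hcompl : IsCompl Up Um)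
    (hSp : ∀ u ∈ Up, S u = u) (hSm : ∀ u ∈ Um, S u = -u) {f : M →ₗ[R] M}
    (hfp : ∀ u ∈ Up, f u ∈ Um) (hfm : ∀ u ∈ Um, f u ∈ Up) :
    S ∘ₗ f = -(f ∘ₗ S) :=
  LinearMap.ext_on_codisjoint hcompl.codisjoint
    (fun u hu => by simp [hSm _ (hfp u hu), hSp u hu])
    (fun u hu => by simp [hSp _ (hfm u hu), hSm u hu])

variable {T : M ⊗[R] M →ₗ[R] M ⊗[R] M}

theorem signedSwap_tmul_of_mem_plus (hcompl : IsCompl Up Um)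
    (hTpp : ∀ u₁ ∈ Up, ∀ u₂ ∈ Up, T (u₁ ⊗ₜ[R] u₂) = u₂ ⊗ₜ[R] u₁)
    (hTmp : ∀ u₁ ∈ Um, ∀ u₂ ∈ Up, T (u₁ ⊗ₜ[R] u₂) = u₂ ⊗ₜ[R] u₁)
    (a : M) {b : M} (hb : b ∈ Up) :
    T (a ⊗ₜ b) = b ⊗ₜ a := by
  have : T ∘ₗ (TensorProduct.mk R M M).flip b = TensorProduct.mk R M M b :=
    LinearMap.ext_on_codisjoint hcompl.codisjoint
      (fun u hu => by simp [hTpp u hu b hb]) (fun u hu => by simp [hTmp u hu b hb])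
  exact LinearMap.congr_fun this a

theorem signedSwap_tmul_of_mem_minus (hcompl : IsCompl Up Um)
    (hSp : ∀ u ∈ Up, S u = u) (hSm : ∀ u ∈ Um, S u = -u)
    (hTmm : ∀ u₁ ∈ Um, ∀ u₂ ∈ Um, T (u₁ ⊗ₜ[R] u₂) = -(u₂ ⊗ₜ[R] u₁))
    (hTpm : ∀ u₁ ∈ Up, ∀ u₂ ∈ Um, T (u₁ ⊗ₜ[R] u₂) = u₂ ⊗ₜ[R] u₁)
    (a : M) {b : M} (hb : b ∈ Um) :
    T (a ⊗ₜ b) = b ⊗ₜ S a := by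
  have : T ∘ₗ (TensorProduct.mk R M M).flip b = TensorProduct.mk R M M b ∘ₗ S :=
    LinearMap.ext_on_codisjoint hcompl.codisjoint
      (fun u hu => by simp [hTpm u hu b hb, hSp u hu])
      (fun u hu => by simp [hTmm u hu b hb, hSm u hu, tmul_neg])
  exact LinearMap.congr_fun this a

end Grading

/-- Let `U = U⁺ ⊕ U⁻`, `S` the involution with eigenspaces `U^±`, and `T` the signed
swap on `U⊗U`.  Let `ρ₁ : H → GL(U)` be such that `ρ₁(x)` maps `U^ε` to `U^{ε·ε(x)}`
for a sign function `ε : H → {±1}`.  Then for all `x ∈ H`: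
`T ∘ (ρ₁(x) ⊗ 1) ∘ T⁻¹ = S^((1-ε(x))/2) ⊗ ρ₁(x)` on `U ⊗ U`
(equivalently, since `T` is invertible, `T ∘ (ρ₁(x) ⊗ 1) = (S^((1-ε(x))/2) ⊗ ρ₁(x)) ∘ T`,
where `S^0 = id` when `ε(x) = 1` and `S^1 = S` when `ε(x) = -1`). -/
theorem stmt_17 {U : Type*} [AddCommGroup U] [Module ℂ U]
    (Up Um : Submodule ℂ U) (hcompl : IsCompl Up Um)
    (S : U →ₗ[ℂ] U) (hSp : ∀ u ∈ Up, S u = u) (hSm : ∀ u ∈ Um, S u = -u)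
    (T : U ⊗[ℂ] U →ₗ[ℂ] U ⊗[ℂ] U)
    (hTmm : ∀ u₁ ∈ Um, ∀ u₂ ∈ Um, T (u₁ ⊗ₜ[ℂ] u₂) = -(u₂ ⊗ₜ[ℂ] u₁))
    (hTpp : ∀ u₁ ∈ Up, ∀ u₂ ∈ Up, T (u₁ ⊗ₜ[ℂ] u₂) = u₂ ⊗ₜ[ℂ] u₁)
    (hTpm : ∀ u₁ ∈ Up, ∀ u₂ ∈ Um, T (u₁ ⊗ₜ[ℂ] u₂) = u₂ ⊗ₜ[ℂ] u₁)
    (hTmp : ∀ u₁ ∈ Um, ∀ u₂ ∈ Up, T (u₁ ⊗ₜ[ℂ] u₂) = u₂ ⊗ₜ[ℂ] u₁)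
    {H : Type*} (ρ₁ : H → U →ₗ[ℂ] U) (ε : H → ℤ)
    (hε : ∀ x, ε x = 1 ∨ ε x = -1)
    (hρ₁ : ∀ x : H,
      (ε x = 1 → (∀ u ∈ Up, ρ₁ x u ∈ Up) ∧ (∀ u ∈ Um, ρ₁ x u ∈ Um)) ∧
      (ε x = -1 → (∀ u ∈ Up, ρ₁ x u ∈ Um) ∧ (∀ u ∈ Um, ρ₁ x u ∈ Up))) :
    ∀ x : H,
      T ∘ₗ TensorProduct.map (ρ₁ x) LinearMap.id
        = TensorProduct.map (if ε x = 1 then LinearMap.id else S) (ρ₁ x) ∘ₗ T := by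
  intro x
  refine TensorProduct.ext_of_codisjoint_right hcompl.codisjoint (fun a b hb => ?_)
    (fun a b hb => ?_)
  · have hSb : (if ε x = 1 then LinearMap.id else S) b = b := by
      split_ifs <;> simp [hSp b hb]
    simp [signedSwap_tmul_of_mem_plus hcompl hTpp hTmp _ hb, hSb]
  · simp only [LinearMap.comp_apply, map_tmul, LinearMap.id_apply,
      signedSwap_tmul_of_mem_minus hcompl hSp hSm hTmm hTpm _ hb]
    rcases hε x with h | h
    · obtain ⟨hfp, hfm⟩ := (hρ₁ x).1 h
      have hSρ : S (ρ₁ x a) = ρ₁ x (S a) :=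
        LinearMap.congr_fun (comp_eq_comp_of_mapsTo hcompl hSp hSm hfp hfm) a
      simp [h, hSρ]
    · obtain ⟨hfp, hfm⟩ := (hρ₁ x).2 h
      have hSρ : S (ρ₁ x a) = -ρ₁ x (S a) :=
        LinearMap.congr_fun (comp_eq_neg_comp_of_swaps hcompl hSp hSm hfp hfm) a
      simp [h, hSm b hb, hSρ, tmul_neg, neg_tmul]
end
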